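/- (Random hold-out(q) weights.) Let 1 ≤ q ≤ n, let I be a uniform random subset of {1,…,n} of cardinality q, and set W_i := (n/q)·1_{i∈I}. Let Λ ⊆ {1,…,n} with card(Λ) = m ≥ 1 satisfy q + m > n (so that I ∩ Λ ≠ ∅ almost surely). Then for any i ∈ Λ and W̄ := m^{−1} Σ_{j∈Λ} W_j, one has E[(W_i − W̄)²/W̄ | W̄ > 0] = n/q − 1. -/

import Mathlib

/-!
Exchangeability: a permutation of `{1, …, n}` fixing `Λ` setwise permutes the `q`-subsets and
preserves their uniform law, so `E[(W_i - W̄)² / W̄]` is the same for every `i ∈ Λ` and equals its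
average over `Λ`. Since each `W_j` takes only the values `0` and `c = n/q`, we have `W_j² = c W_j`,
and the average collapses pointwise: `Σ_{j∈Λ} (W_j - W̄)² / W̄ = m (c - W̄)`. The same symmetry
gives `E[W_j] = 1`, hence `E[W̄] = 1`. Finally `q + m > n` forces `W̄ > 0`, so the conditioning is
on the sure event and the answer is `c - 1`.
-/

open MeasureTheory ProbabilityTheory Finset

instance {α : Type*} : MeasurableSpace (Finset α) := ⊤

/-- uniform probability measure on a finite type. -/
noncomputable def unifM (α : Type*) [Fintype α] [MeasurableSpace α] : Measure α :=
  (Fintype.card α : ENNReal)⁻¹ • Measure.count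

/-- Random hold-out(q) weights: `W_i = (n/q) 1_{i ∈ I}` for `I` a uniform random subset of
`{1, …, n}` of cardinality `q`. -/
noncomputable def rhoW (n q : ℕ) (i : Fin n) (I : {t : Finset (Fin n) // t.card = q}) : ℝ :=
  if i ∈ I.1 then (n : ℝ) / q else 0

section Uniform

variable {α : Type*} [Fintype α] [MeasurableSpace α]

instance [Nonempty α] : IsProbabilityMeasure (unifM α) := by
  constructor
  rw [unifM, Measure.smul_apply, Measure.count_univ, ENat.card_eq_coe_fintype_card,
    ENat.toENNReal_coe, smul_eq_mul,
    ENNReal.inv_mul_cancel (Nat.cast_ne_zero.2 Fintype.card_ne_zero) (ENNReal.natCast_ne_top _)]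

theorem integral_unifM [MeasurableSingletonClass α] (f : α → ℝ) :
    ∫ a, f a ∂unifM α = (Fintype.card α : ℝ)⁻¹ * ∑ a, f a := by
  rw [unifM, integral_smul_measure, integral_fintype .of_finite]
  simp [Finset.mul_sum]

theorem integral_unifM_comp_equiv [MeasurableSingletonClass α] (e : α ≃ α) (f : α → ℝ) :
    ∫ a, f (e a) ∂unifM α = ∫ a, f a ∂unifM α := by
  rw [integral_unifM, integral_unifM, Equiv.sum_comp e f]

end Uniform

theorem Finset.map_swap_eq_self {α : Type*} [DecidableEq α] {s : Finset α} {i j : α}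
    (hi : i ∈ s) (hj : j ∈ s) : s.map (Equiv.swap i j).toEmbedding = s :=
  map_perm fun x hx => by
    by_cases hxi : x = i
    · exact hxi ▸ hi
    by_cases hxj : x = j
    · exact hxj ▸ hj
    exact absurd (Equiv.swap_apply_of_ne_of_ne hxi hxj) hx

theorem sum_sq_sub_mean_div_mean {ι : Type*} (s : Finset ι) (w : ι → ℝ) (c : ℝ)
    (hw : ∀ j ∈ s, w j ^ 2 = c * w j) (hmean : (∑ j ∈ s, w j) / #s ≠ 0) :
    ∑ j ∈ s, (w j - (∑ k ∈ s, w k) / #s) ^ 2 / ((∑ k ∈ s, w k) / #s) =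
      #s * (c - (∑ k ∈ s, w k) / #s) := by
  set M := (∑ k ∈ s, w k) / #s
  have hs : (#s : ℝ) ≠ 0 := by rintro h; simp [M, h] at hmean
  have hsum : ∑ k ∈ s, w k = #s * M := by simp only [M]; field_simp
  have hsq : ∑ j ∈ s, (w j - M) ^ 2 = #s * M * (c - M) := by
    simp only [sub_sq, sum_add_distrib, sum_sub_distrib, sum_congr rfl hw, ← mul_sum, ← sum_mul,
      hsum, sum_const, nsmul_eq_mul]
    ring
  rw [← sum_div, hsq]
  field_simp

section Subsets

variable {α : Type*} {q : ℕ}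

def permSubsets (σ : Equiv.Perm α) : {t : Finset α // #t = q} ≃ {t : Finset α // #t = q} :=
  σ.finsetCongr.subtypeEquiv fun t => by simp

theorem nonempty_subsets_card_eq [Fintype α] (hq : q ≤ Fintype.card α) :
    Nonempty {t : Finset α // #t = q} :=
  have ⟨t, ht⟩ := powersetCard_nonempty.2 (by simpa using hq : q ≤ #(univ : Finset α))
  ⟨⟨t, (mem_powersetCard.1 ht).2⟩⟩

end Subsets

namespace HoldOut

variable {n q : ℕ}

/-- The paper's `W̄`, with `m = #Λ`. -/
noncomputable def holdoutMean (Λ : Finset (Fin n)) (I : {t : Finset (Fin n) // #t = q}) : ℝ :=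
  (∑ j ∈ Λ, rhoW n q j I) / #Λ

theorem rhoW_permSubsets (σ : Equiv.Perm (Fin n)) (j : Fin n)
    (I : {t : Finset (Fin n) // #t = q}) :
    rhoW n q (σ j) (permSubsets σ I) = rhoW n q j I := by
  simp [rhoW, permSubsets]

theorem holdoutMean_permSubsets {σ : Equiv.Perm (Fin n)} {Λ : Finset (Fin n)}
    (hσ : Λ.map σ.toEmbedding = Λ) (I : {t : Finset (Fin n) // #t = q}) :
    holdoutMean Λ (permSubsets σ I) = holdoutMean Λ I := by
  conv_lhs => rw [holdoutMean, ← hσ, sum_map, card_map]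
  simp only [Equiv.coe_toEmbedding, rhoW_permSubsets, holdoutMean]

theorem rhoW_nonneg (j : Fin n) (I : {t : Finset (Fin n) // #t = q}) : 0 ≤ rhoW n q j I := by
  unfold rhoW
  split_ifs <;> positivity

theorem rhoW_sq (j : Fin n) (I : {t : Finset (Fin n) // #t = q}) :
    rhoW n q j I ^ 2 = n / q * rhoW n q j I := by
  unfold rhoW
  split_ifs <;> ring

theorem sum_rhoW (hq : q ≠ 0) (I : {t : Finset (Fin n) // #t = q}) :
    ∑ j, rhoW n q j I = n := by
  simp only [rhoW, sum_ite_mem, univ_inter, sum_const, I.2, nsmul_eq_mul]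
  field_simp

theorem holdoutMean_pos {Λ : Finset (Fin n)} (hq : q ≠ 0) (hqΛ : n < q + #Λ)
    (I : {t : Finset (Fin n) // #t = q}) : 0 < holdoutMean Λ I := by
  obtain ⟨j, hj⟩ := inter_nonempty_of_card_lt_card_add_card (subset_univ I.1) (subset_univ Λ)
    (by simpa [I.2] using hqΛ)
  rw [mem_inter] at hj
  refine div_pos (sum_pos' (fun k _ => rhoW_nonneg k I) ⟨j, hj.2, ?_⟩)
    (Nat.cast_pos.2 (card_pos.2 ⟨j, hj.2⟩))
  simpa [rhoW, hj.1] using div_pos (Nat.cast_pos.2 j.pos) (Nat.cast_pos.2 (Nat.pos_of_ne_zero hq))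

theorem integral_rhoW_eq (i j : Fin n) :
    ∫ I, rhoW n q i I ∂unifM _ = ∫ I, rhoW n q j I ∂unifM {t : Finset (Fin n) // #t = q} := by
  have h := rhoW_permSubsets (q := q) (Equiv.swap i j) i
  simp only [Equiv.swap_apply_left] at h
  refine Eq.trans ?_ (integral_unifM_comp_equiv (permSubsets (Equiv.swap i j)) _)
  simp only [h]

theorem integral_rhoW (hq : q ≠ 0) (hqn : q ≤ n) (j : Fin n) :
    ∫ I, rhoW n q j I ∂unifM {t : Finset (Fin n) // #t = q} = 1 := by
  have := nonempty_subsets_card_eq (α := Fin n) (by simpa using hqn)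
  have hn : (n : ℝ) ≠ 0 := by norm_cast; omega
  refine (mul_eq_left₀ hn).1 ?_
  calc n * ∫ I, rhoW n q j I ∂unifM _
      = ∑ i : Fin n, ∫ I, rhoW n q i I ∂unifM _ := by simp [integral_rhoW_eq _ j]
    _ = ∫ I, ∑ i : Fin n, rhoW n q i I ∂unifM _ :=
        (integral_finsetSum _ fun _ _ => .of_finite).symm
    _ = n := by simp [sum_rhoW hq]

theorem integral_holdoutMean (hq : q ≠ 0) (hqn : q ≤ n) {Λ : Finset (Fin n)} (hΛ : Λ.Nonempty) :
    ∫ I, holdoutMean Λ I ∂unifM {t : Finset (Fin n) // #t = q} = 1 := by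
  have := nonempty_subsets_card_eq (α := Fin n) (by simpa using hqn)
  simp only [holdoutMean]
  rw [integral_div, integral_finsetSum _ fun _ _ => .of_finite]
  simp [integral_rhoW hq hqn, hΛ.card_ne_zero]

theorem integral_sq_sub_holdoutMean_div_eq {Λ : Finset (Fin n)} {i j : Fin n} (hi : i ∈ Λ)
    (hj : j ∈ Λ) :
    ∫ I, (rhoW n q i I - holdoutMean Λ I) ^ 2 / holdoutMean Λ I ∂unifM _ =
      ∫ I, (rhoW n q j I - holdoutMean Λ I) ^ 2 / holdoutMean Λ I
        ∂unifM {t : Finset (Fin n) // #t = q} := by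
  have hW := rhoW_permSubsets (q := q) (Equiv.swap i j) i
  simp only [Equiv.swap_apply_left] at hW
  refine Eq.trans ?_ (integral_unifM_comp_equiv (permSubsets (Equiv.swap i j)) _)
  simp only [hW, holdoutMean_permSubsets (map_swap_eq_self hi hj)]

end HoldOut

open HoldOut in
theorem rho_R2_general (n q : ℕ) (hq1 : 1 ≤ q) (hqn : q ≤ n)
    (Λ : Finset (Fin n)) (m : ℕ) (hm : Λ.card = m) (hqm : n < q + m)
    (i : Fin n) (hi : i ∈ Λ) :
    ∫ I, (rhoW n q i I - (∑ j ∈ Λ, rhoW n q j I) / m) ^ 2 /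
        ((∑ j ∈ Λ, rhoW n q j I) / m)
      ∂((unifM {t : Finset (Fin n) // t.card = q})[|
        {I | 0 < (∑ j ∈ Λ, rhoW n q j I) / m}]) =
      (n : ℝ) / q - 1 := by
  subst hm
  have hq : q ≠ 0 := by omega
  have hΛ : (#Λ : ℝ) ≠ 0 := Nat.cast_ne_zero.2 (card_ne_zero_of_mem hi)
  have := nonempty_subsets_card_eq (α := Fin n) (by simpa using hqn)
  change ∫ I, (rhoW n q i I - holdoutMean Λ I) ^ 2 / holdoutMean Λ I
    ∂(unifM _)[|{I | 0 < holdoutMean Λ I}] = _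
  simp only [holdoutMean_pos hq hqm, Set.ofPred_true, cond_univ]
  calc ∫ I, (rhoW n q i I - holdoutMean Λ I) ^ 2 / holdoutMean Λ I ∂unifM _
      = (#Λ : ℝ)⁻¹ * ∑ j ∈ Λ,
          ∫ I, (rhoW n q j I - holdoutMean Λ I) ^ 2 / holdoutMean Λ I ∂unifM _ := by
        rw [sum_congr rfl fun j hj => integral_sq_sub_holdoutMean_div_eq hj hi, sum_const,
          nsmul_eq_mul, inv_mul_cancel_left₀ hΛ]
    _ = (#Λ : ℝ)⁻¹ * ∫ I, #Λ * (n / q - holdoutMean Λ I) ∂unifM _ := by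
        rw [← integral_finsetSum _ fun _ _ => .of_finite]
        congr 2 with I
        exact sum_sq_sub_mean_div_mean Λ _ _ (fun j _ => rhoW_sq j I) (holdoutMean_pos hq hqm I).ne'
    _ = n / q - 1 := by
        rw [integral_const_mul, integral_sub .of_finite .of_finite, integral_const,
          integral_holdoutMean hq hqn ⟨i, hi⟩, inv_mul_cancel_left₀ hΛ]
        simp

/-- **`R_{2,W}` for Random hold-out(q) weights**: for any cell `Λ` of cardinality `m ≥ 1`
with `q + m > n` (so that `I ∩ Λ ≠ ∅` a.s.), any `i ∈ Λ` and `W̄ = m⁻¹ Σ_{j∈Λ} W_j`, one has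
`E[(W_i − W̄)²/W̄ | W̄ > 0] = n/q − 1`. -/
theorem rho_R2 (n q : ℕ) (hq1 : 1 ≤ q) (hqn : q ≤ n)
    (Λ : Finset (Fin n)) (m : ℕ) (hm : Λ.card = m) (hm1 : 1 ≤ m) (hqm : n < q + m)
    (i : Fin n) (hi : i ∈ Λ) :
    ∫ I, (rhoW n q i I - (∑ j ∈ Λ, rhoW n q j I) / m) ^ 2 /
        ((∑ j ∈ Λ, rhoW n q j I) / m)
      ∂((unifM {t : Finset (Fin n) // t.card = q})[|
        {I | 0 < (∑ j ∈ Λ, rhoW n q j I) / m}]) =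
      (n : ℝ) / q - 1 :=
  rho_R2_general n q hq1 hqn Λ m hm hqm i hi
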